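/- Let n ≥ 2 and m ≥ 1 with m + 1 ≤ n, and let η : (Fin (m+1) → Fin n) → (Fin (m+1) → Fin n) → ℝ satisfy: (i) η (I ∘ σ) J = sign(σ) · η I J and η I (J ∘ σ) = sign(σ) · η I J for every permutation σ of Fin (m+1) (antisymmetry in each index block); (ii) η I J = η J I; (iii) Lorentz invariance: for every Lorentz matrix A and all I, J, η I J = Σ_{I′, J′ : Fin (m+1) → Fin n} (∏_{r} A (I r) (I′ r)) · (∏_{s} A (J s) (J′ s)) · η I′ J′. Then there exists c ∈ ℝ such that for every alternating ω : (Fin (m+1) → Fin n) → ℝ (i.e. ω (I ∘ σ) = sign(σ) · ω I for all permutations σ): Σ_{I, J} η I J · ω I · ω J = c · Σ_I (∏_{r} ε (I r)) · (ω I)². -/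

import Mathlib

open Matrix

noncomputable section

namespace GeomActions

/-- Signature function: `ε 0 = −1`, `ε i = 1` for `i ≠ 0`. -/
def eps (n : ℕ) (i : Fin n) : ℝ := if (i : ℕ) = 0 then -1 else 1

/-- The Minkowski form `η = diag(−1, 1, …, 1)` of signature `(1, n−1)`. -/
def etaMat (n : ℕ) : Matrix (Fin n) (Fin n) ℝ := Matrix.diagonal (eps n)

/-- The space of (components of) 2-jets of metrics: triples `(w₂, w₃, w₄)` encoding
`(g_{ij}, g_{ij,k}, g_{ij,kl})` at a point in a chart. -/
abbrev W (n : ℕ) :=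
  (Fin n → Fin n → ℝ) × (Fin n → Fin n → Fin n → ℝ) × (Fin n → Fin n → Fin n → Fin n → ℝ)

/-- An admissible parameter triple `(J, S, C)` for a coordinate change:
`J` invertible, `S` symmetric in its last two indices, `C` symmetric in its last three. -/
structure Admissible (n : ℕ) (J : Matrix (Fin n) (Fin n) ℝ)
    (S : Fin n → Fin n → Fin n → ℝ) (C : Fin n → Fin n → Fin n → Fin n → ℝ) : Prop where
  hJ : IsUnit J
  hS : ∀ a i k, S a i k = S a k i
  hC1 : ∀ a i k l, C a i k l = C a k i l
  hC2 : ∀ a i k l, C a i k l = C a i l k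

/-- Transformation rule `Φ_{J,S,C}` for the 2-jet of a metric under a coordinate change. -/
def Phi (n : ℕ) (J : Matrix (Fin n) (Fin n) ℝ) (S : Fin n → Fin n → Fin n → ℝ)
    (C : Fin n → Fin n → Fin n → Fin n → ℝ) (w : W n) : W n :=
  ⟨fun i j => ∑ a, ∑ b, J a i * J b j * w.1 a b,
   fun i j k =>
     (∑ a, ∑ b, ∑ c, J a i * J b j * J c k * w.2.1 a b c) +
       ∑ a, ∑ b, (S a i k * J b j + J a i * S b j k) * w.1 a b,
   fun i j k l =>
     (∑ a, ∑ b, ∑ c, ∑ d, J a i * J b j * J c k * J d l * w.2.2 a b c d) +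
     (∑ a, ∑ b, ∑ c,
       (S a i l * J b j * J c k + J a i * S b j l * J c k + J a i * J b j * S c k l +
         J c l * S a i k * J b j + J c l * J a i * S b j k) * w.2.1 a b c) +
     ∑ a, ∑ b,
       (S a i k * S b j l + S a i l * S b j k + C a i k l * J b j + J a i * C b j k l) * w.1 a b⟩

/-- `w ∈ W n` is a metric 2-jet: `w₂` symmetric and congruent to `η`, and `w₃`, `w₄`
have the symmetries of derivatives of a metric. -/
def MetricJet (n : ℕ) (w : W n) : Prop :=
  (∀ i j, w.1 i j = w.1 j i) ∧
  (∃ P : Matrix (Fin n) (Fin n) ℝ, IsUnit P ∧ Pᵀ * Matrix.of w.1 * P = etaMat n) ∧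
  (∀ i j k, w.2.1 i j k = w.2.1 j i k) ∧
  (∀ i j k l, w.2.2 i j k l = w.2.2 j i k l ∧ w.2.2 i j k l = w.2.2 i j l k)

/-- The symmetries `w i j k l = w j i k l = w i j l k` of the second-derivative variables. -/
def SymW4 (n : ℕ) (w : Fin n → Fin n → Fin n → Fin n → ℝ) : Prop :=
  ∀ i j k l, w i j k l = w j i k l ∧ w i j k l = w i j l k

/-- Symmetry under all permutations of the last three arguments. -/
def Sym3Last (n : ℕ) (c : Fin n → Fin n → Fin n → Fin n → ℝ) : Prop :=
  ∀ i j k l, c i j k l = c i k j l ∧ c i j k l = c i j l k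

/-- The scalar curvature at a point, in Lorentz normal coordinates where
`g_{ij} = η i j`, `g_{ij,k} = 0`, `g_{ij,kl} = w4 i j k l`. -/
def Rform (n : ℕ) (w4 : Fin n → Fin n → Fin n → Fin n → ℝ) : ℝ :=
  ∑ i, ∑ j, eps n i * eps n j * (w4 i j i j - w4 i i j j)

/-- The contravariant Ricci tensor at a point, in Lorentz normal coordinates. -/
def Ricform (n : ℕ) (w4 : Fin n → Fin n → Fin n → Fin n → ℝ) (i j : Fin n) : ℝ :=
  (1 / 2) * eps n i * eps n j *
    ∑ k, eps n k * (w4 i k j k + w4 j k i k - w4 i j k k - w4 k k i j)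

/-- The space of 2-jets of a metric together with 1-jets `(D_I, D_{I,j})` of a
type-(0,m) tensor field. -/
abbrev Y (n m : ℕ) :=
  W n × ((Fin m → Fin n) → ℝ) × ((Fin m → Fin n) → Fin n → ℝ)

/-- Transformation rule `Ψ_{J,S,C}` for the pair (metric 2-jet, matter field 1-jet). -/
def Psi (n m : ℕ) (J : Matrix (Fin n) (Fin n) ℝ) (S : Fin n → Fin n → Fin n → ℝ)
    (C : Fin n → Fin n → Fin n → Fin n → ℝ) (p : Y n m) : Y n m :=
  ⟨Phi n J S C p.1,
   fun I => ∑ A : Fin m → Fin n, (∏ r, J (A r) (I r)) * p.2.1 A,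
   fun I j =>
     (∑ A : Fin m → Fin n, ∑ b, (∏ r, J (A r) (I r)) * J b j * p.2.2 A b) +
     ∑ r : Fin m, ∑ A : Fin m → Fin n,
       S (A r) (I r) j * (∏ s ∈ Finset.univ.erase r, J (A s) (I s)) * p.2.1 A⟩

/-- The full antisymmetrisation `Alt y′` of the rank-(m+1) tensor
`z I = y′ (I ∘ castSucc) (I (last m))` determined by the derivative variables `y′`. -/
def altD (n m : ℕ) (y' : (Fin m → Fin n) → Fin n → ℝ) (I : Fin (m + 1) → Fin n) : ℝ :=
  (1 / (Nat.factorial (m + 1) : ℝ)) *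
    ∑ σ : Equiv.Perm (Fin (m + 1)),
      ((Equiv.Perm.sign σ : ℤ) : ℝ) *
        y' (fun r => I (σ (Fin.castSucc r))) (I (σ (Fin.last m)))

/-- Lorentz matrices: `Aᵀ * η * A = η`. -/
def IsLorentz (n : ℕ) (A : Matrix (Fin n) (Fin n) ℝ) : Prop :=
  Aᵀ * etaMat n * A = etaMat n

/-- Lorentz invariance of a rank-2 tensor. -/
def LorentzInv2 (n : ℕ) (b : Fin n → Fin n → ℝ) : Prop :=
  ∀ A : Matrix (Fin n) (Fin n) ℝ, IsLorentz n A →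
    ∀ i j, b i j = ∑ p, ∑ q, A i p * A j q * b p q

/-- Lorentz invariance of a rank-4 tensor. -/
def LorentzInv4 (n : ℕ) (a : Fin n → Fin n → Fin n → Fin n → ℝ) : Prop :=
  ∀ A : Matrix (Fin n) (Fin n) ℝ, IsLorentz n A →
    ∀ i j k l, a i j k l = ∑ p, ∑ q, ∑ r, ∑ s, A i p * A j q * A k r * A l s * a p q r s

/-- Lorentz invariance of a rank-6 tensor. -/
def LorentzInv6 (n : ℕ) (a : Fin n → Fin n → Fin n → Fin n → Fin n → Fin n → ℝ) : Prop :=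
  ∀ A : Matrix (Fin n) (Fin n) ℝ, IsLorentz n A →
    ∀ i j k l m p, a i j k l m p =
      ∑ a₁, ∑ a₂, ∑ a₃, ∑ a₄, ∑ a₅, ∑ a₆,
        A i a₁ * A j a₂ * A k a₃ * A l a₄ * A m a₅ * A p a₆ * a a₁ a₂ a₃ a₄ a₅ a₆

/-- Lorentz invariance of a rank-k tensor indexed by `Fin k → Fin n`. -/
def LorentzInvT (n k : ℕ) (T : (Fin k → Fin n) → ℝ) : Prop :=
  ∀ A : Matrix (Fin n) (Fin n) ℝ, IsLorentz n A →
    ∀ I : Fin k → Fin n, T I = ∑ J : Fin k → Fin n, (∏ r, A (I r) (J r)) * T J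

/-- Number of occurrences of `v` among `(i, j, k, l)`. -/
def cnt4 (n : ℕ) (i j k l v : Fin n) : ℕ :=
  (if i = v then 1 else 0) + (if j = v then 1 else 0) + (if k = v then 1 else 0) +
    (if l = v then 1 else 0)

/-- Coordinate direction in the `w₂`-variables. -/
def e2 (n : ℕ) (i j : Fin n) : W n :=
  ⟨fun a b => if a = i ∧ b = j then 1 else 0, 0, 0⟩

/-- Coordinate direction in the `w₃`-variables. -/
def e3 (n : ℕ) (i j k : Fin n) : W n :=
  ⟨0, fun a b c => if a = i ∧ b = j ∧ c = k then 1 else 0, 0⟩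

/-- Coordinate direction in the `w₄`-variables. -/
def e4 (n : ℕ) (i j k l : Fin n) : W n :=
  ⟨0, 0, fun a b c d => if a = i ∧ b = j ∧ c = k ∧ d = l then 1 else 0⟩

/-- Coordinate direction in the `y′`-variables. -/
def eY' (n m : ℕ) (I : Fin m → Fin n) (j : Fin n) : Y n m :=
  ⟨0, 0, fun A b => if A = I ∧ b = j then 1 else 0⟩

/-!
Reflections `diag(1, …, -1, …, 1)` are Lorentz, so `η I J = 0` unless `I` and `J` are injective
with the same range; hence only the diagonal values `η I I` enter the quadratic form, each
reordering `I ∘ σ` of `I` contributing once, which gives the factor `(m + 1)!`. Permutations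
fixing the time index are Lorentz too, so `η I I` only depends on whether `I` contains the time
index, and a boost in the plane of the time index and a spatial index `x` turns the identity
`η (x, K) (x, K) = cosh² θ · η (x, K) (x, K) + sinh² θ · η (0, K) (0, K)` into
`η (x, K) (x, K) = -η (0, K) (0, K)`. Thus `η I I` is a constant multiple of `∏ r, ε (I r)`.
-/

open Equiv Function

section Tuples

variable {α : Type*} {k : ℕ}

def IsAlternating (f : (Fin k → α) → ℝ) : Prop :=
  ∀ (σ : Perm (Fin k)) (I : Fin k → α),
    f (fun r => I (σ r)) = ((Perm.sign σ : ℤ) : ℝ) * f I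

lemma sign_mul_sign_self (σ : Perm (Fin k)) :
    ((Perm.sign σ : ℤ) : ℝ) * ((Perm.sign σ : ℤ) : ℝ) = 1 := by
  rw [← Int.cast_mul, Int.units_coe_mul_self, Int.cast_one]

lemma IsAlternating.apply_eq_zero_of_not_injective {f : (Fin k → α) → ℝ}
    (hf : IsAlternating f) {I : Fin k → α} (hI : ¬Injective I) : f I = 0 := by
  classical
  obtain ⟨a, b, hab, hne⟩ : ∃ a b, I a = I b ∧ a ≠ b := by
    simpa [Injective] using hI
  have h := hf (swap a b) I
  rw [funext (apply_swap_eq_self hab), Perm.sign_swap hne] at h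
  push_cast at h
  linarith

lemma exists_perm_comp_eq_of_range_eq {I J : Fin k → α} (hI : Injective I) (hJ : Injective J)
    (h : Set.range J = Set.range I) : ∃ σ : Perm (Fin k), (fun r => I (σ r)) = J :=
  ⟨(ofInjective J hJ).trans ((setCongr h).trans (ofInjective I hI).symm),
    funext fun r => by simp [apply_ofInjective_symm]⟩

lemma sum_eq_sum_perm_of_injective [Fintype α] [DecidableEq α] {I : Fin k → α}
    (hI : Injective I) (g : (Fin k → α) → ℝ)
    (hg : ∀ J, (∀ σ : Perm (Fin k), (fun r => I (σ r)) ≠ J) → g J = 0) :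
    ∑ J, g J = ∑ σ : Perm (Fin k), g (fun r => I (σ r)) := by
  have hinj : Injective fun (σ : Perm (Fin k)) r => I (σ r) := fun σ τ h =>
    Equiv.ext fun r => hI (congrFun h r)
  rw [← Finset.sum_image fun σ _ τ _ h => hinj h]
  refine (Finset.sum_subset (Finset.subset_univ _) fun J _ hJ => hg J fun σ hσ => ?_).symm
  exact hJ (Finset.mem_image.mpr ⟨σ, Finset.mem_univ _, hσ⟩)

lemma sum_prod_mul_eq_of_support [Fintype α] [DecidableEq α] (c : Fin k → α → ℝ)
    (g : Fin k → α) (hc : ∀ r j, j ≠ g r → c r j = 0) (f : (Fin k → α) → ℝ) :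
    ∑ x : Fin k → α, (∏ r, c r (x r)) * f x = (∏ r, c r (g r)) * f g := by
  refine Fintype.sum_eq_single g fun x hx => ?_
  obtain ⟨r, hr⟩ : ∃ r, x r ≠ g r := not_forall.mp (mt funext hx)
  rw [Finset.prod_eq_zero (Finset.mem_univ r) (hc r _ hr), zero_mul]

lemma sum_prod_mul_eq_sum_cons [Fintype α] [DecidableEq α] (c : Fin (k + 1) → α → ℝ)
    (K : Fin k → α) (hc : ∀ r j, j ≠ K r → c r.succ j = 0)
    (f : (Fin (k + 1) → α) → ℝ) :
    ∑ x : Fin (k + 1) → α, (∏ r, c r (x r)) * f x =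
      (∏ r, c r.succ (K r)) * ∑ j, c 0 j * f (Fin.cons j K) := by
  rw [← (Fin.consEquiv fun _ => α).sum_comp, Fintype.sum_prod_type, Finset.mul_sum]
  refine Fintype.sum_congr _ _ fun j => ?_
  simp only [Fin.consEquiv_apply, Fin.prod_univ_succ, Fin.cons_zero, Fin.cons_succ, mul_assoc,
    ← Finset.mul_sum]
  rw [sum_prod_mul_eq_of_support _ K hc, mul_left_comm]
  rfl

end Tuples

section Lorentz

variable {n : ℕ}

lemma eps_eq_ite {t : Fin n} (ht : (t : ℕ) = 0) (i : Fin n) :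
    eps n i = if i = t then -1 else 1 := by
  simp [eps, Fin.ext_iff, ht]

lemma eps_mul_self (i : Fin n) : eps n i * eps n i = 1 := by
  unfold eps; split_ifs <;> norm_num

lemma eps_apply_perm {t : Fin n} (ht : (t : ℕ) = 0) {π : Perm (Fin n)} (hπ : π t = t)
    (i : Fin n) : eps n (π i) = eps n i := by
  have h : π i = t ↔ i = t := ⟨fun h => π.injective (h.trans hπ.symm), fun h => h ▸ hπ⟩
  simp only [eps_eq_ite ht, h]

lemma prod_ite_eq_neg_one_of_injective {k : ℕ} {I : Fin k → Fin n} (hI : Injective I)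
    (v : Fin n) :
    (∏ r, if I r = v then (-1 : ℝ) else 1) = if v ∈ Set.range I then -1 else 1 := by
  split_ifs with hv
  · obtain ⟨r₀, hr₀⟩ := hv
    rw [Fintype.prod_eq_single r₀ fun r hr => if_neg fun h => hr (hI (h.trans hr₀.symm)),
      if_pos hr₀]
  · exact Finset.prod_eq_one fun r _ => if_neg fun h => hv ⟨r, h⟩

lemma isLorentz_reflection (v : Fin n) :
    IsLorentz n (diagonal fun i => if i = v then -1 else 1) := by
  rw [IsLorentz, etaMat, diagonal_transpose, diagonal_mul_diagonal, diagonal_mul_diagonal]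
  congr 1
  funext i
  split_ifs <;> ring

lemma isLorentz_permMatrix {π : Perm (Fin n)} (hπ : ∀ i, eps n (π i) = eps n i) :
    IsLorentz n (π.permMatrix ℝ) := by
  rw [IsLorentz, transpose_permMatrix, Matrix.mul_assoc, PEquiv.toMatrix_toPEquiv_mul,
    PEquiv.mul_toMatrix_toPEquiv, submatrix_submatrix, Function.id_comp, Function.comp_id,
    Perm.inv_def, etaMat, submatrix_diagonal_equiv]
  congr 1
  funext i
  simpa using (hπ (π.symm i)).symm

/-- The boost of rapidity `θ` in the `(t, x)`-plane, where `c = cosh θ` and `s = sinh θ`. -/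
def boost (t x : Fin n) (c s : ℝ) : Matrix (Fin n) (Fin n) ℝ :=
  1 + (c - 1) • (single t t 1 + single x x 1) + s • (single t x 1 + single x t 1)

lemma isLorentz_boost {t x : Fin n} (htx : t ≠ x) (ht : eps n t = -1) (hx : eps n x = 1)
    {c s : ℝ} (hcs : c ^ 2 - s ^ 2 = 1) : IsLorentz n (boost t x c s) := by
  unfold IsLorentz etaMat boost
  ext j k
  have hsplit : ∀ i, i = t ∨ i = x ∨ (t ≠ i ∧ i ≠ t ∧ x ≠ i ∧ i ≠ x) := by tauto
  rcases hsplit j with rfl | rfl | hj <;> rcases hsplit k with rfl | rfl | hk <;>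
    simp [Matrix.mul_apply, single_apply, one_apply, add_mul, mul_add, Finset.sum_add_distrib,
      diagonal_apply, *, Ne.symm htx] <;> linarith

lemma boost_apply_of_ne {t x i : Fin n} (hit : i ≠ t) (hix : i ≠ x) (c s : ℝ) (j : Fin n) :
    boost t x c s i j = if i = j then 1 else 0 := by
  simp [boost, one_apply, Ne.symm hit, Ne.symm hix]

lemma sum_boost_mul {t x : Fin n} (htx : t ≠ x) (c s : ℝ) (g : Fin n → ℝ) :
    ∑ j, boost t x c s x j * g j = c * g x + s * g t := by
  rw [Fintype.sum_eq_add x t (Ne.symm htx) fun j hj => by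
    simp [boost, one_apply, htx, Ne.symm hj.1, Ne.symm hj.2]]
  simp [boost, one_apply, htx, Ne.symm htx]

end Lorentz

structure IsLorentzInvariantAltForm {k n : ℕ}
    (η : (Fin k → Fin n) → (Fin k → Fin n) → ℝ) : Prop where
  alternating_left : ∀ (σ : Perm (Fin k)) (I J : Fin k → Fin n),
    η (fun r => I (σ r)) J = ((Perm.sign σ : ℤ) : ℝ) * η I J
  symm : ∀ I J, η I J = η J I
  lorentz : ∀ A : Matrix (Fin n) (Fin n) ℝ, IsLorentz n A → ∀ I J : Fin k → Fin n,
    η I J = ∑ I' : Fin k → Fin n, ∑ J' : Fin k → Fin n,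
      (∏ r, A (I r) (I' r)) * (∏ s, A (J s) (J' s)) * η I' J'

namespace IsLorentzInvariantAltForm

variable {k n : ℕ} {η : (Fin k → Fin n) → (Fin k → Fin n) → ℝ}

lemma alternating_right (hη : IsLorentzInvariantAltForm η) (I : Fin k → Fin n) :
    IsAlternating (η I) := fun σ J => by
  rw [hη.symm, hη.alternating_left, hη.symm]

lemma eq_sum_mul_sum (hη : IsLorentzInvariantAltForm η) {A : Matrix (Fin n) (Fin n) ℝ}
    (hA : IsLorentz n A) (I J : Fin k → Fin n) :
    η I J = ∑ I' : Fin k → Fin n,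
      (∏ r, A (I r) (I' r)) * ∑ J' : Fin k → Fin n, (∏ s, A (J s) (J' s)) * η I' J' := by
  simp only [hη.lorentz A hA I J, Finset.mul_sum, mul_assoc]

lemma apply_eq_of_rows_single (hη : IsLorentzInvariantAltForm η)
    {A : Matrix (Fin n) (Fin n) ℝ} (hA : IsLorentz n A) {I J I' J' : Fin k → Fin n}
    (hI : ∀ r j, j ≠ I' r → A (I r) j = 0) (hJ : ∀ s j, j ≠ J' s → A (J s) j = 0) :
    η I J = (∏ r, A (I r) (I' r)) * ((∏ s, A (J s) (J' s)) * η I' J') := by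
  rw [hη.eq_sum_mul_sum hA, sum_prod_mul_eq_of_support (fun r => A (I r)) I' hI,
    sum_prod_mul_eq_of_support (fun s => A (J s)) J' hJ]

lemma apply_eq_zero_of_mem_range (hη : IsLorentzInvariantAltForm η) {I J : Fin k → Fin n}
    (hI : Injective I) {v : Fin n} (hvI : v ∈ Set.range I) (hvJ : v ∉ Set.range J) :
    η I J = 0 := by
  have hdiag : ∀ (K : Fin k → Fin n) s j, j ≠ K s →
      (diagonal fun i => if i = v then (-1 : ℝ) else 1) (K s) j = 0 :=
    fun K s j hj => diagonal_apply_ne _ (Ne.symm hj)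
  have h := hη.apply_eq_of_rows_single (isLorentz_reflection v) (hdiag I) (hdiag J)
  simp only [diagonal_apply_eq] at h
  rw [prod_ite_eq_neg_one_of_injective hI, if_pos hvI,
    Finset.prod_eq_one fun s _ => if_neg fun h => hvJ ⟨s, h⟩] at h
  linarith

lemma apply_eq_zero_of_range_ne (hη : IsLorentzInvariantAltForm η) {I J : Fin k → Fin n}
    (hI : Injective I) (hJ : Injective J) (h : Set.range I ≠ Set.range J) : η I J = 0 := by
  obtain ⟨v, hv⟩ : ∃ v, ¬(v ∈ Set.range I ↔ v ∈ Set.range J) :=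
    not_forall.mp (mt Set.ext h)
  by_cases hvI : v ∈ Set.range I
  · exact hη.apply_eq_zero_of_mem_range hI hvI (fun hvJ => hv (iff_of_true hvI hvJ))
  · rw [hη.symm]
    exact hη.apply_eq_zero_of_mem_range hJ (by tauto) hvI

lemma sum_apply_mul (hη : IsLorentzInvariantAltForm η) {ω : (Fin k → Fin n) → ℝ}
    (hω : IsAlternating ω) (I : Fin k → Fin n) :
    ∑ J, η I J * ω J = k.factorial * (η I I * ω I) := by
  by_cases hI : Injective I
  · have hoff : ∀ J, (∀ σ : Perm (Fin k), (fun r => I (σ r)) ≠ J) →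
        η I J * ω J = 0 := by
      intro J hJ
      by_cases hJinj : Injective J
      · have hrange : Set.range I ≠ Set.range J := fun h => by
          obtain ⟨σ, hσ⟩ := exists_perm_comp_eq_of_range_eq hI hJinj h.symm
          exact hJ σ hσ
        rw [hη.apply_eq_zero_of_range_ne hI hJinj hrange, zero_mul]
      · rw [hω.apply_eq_zero_of_not_injective hJinj, mul_zero]
    have horbit : ∀ σ : Perm (Fin k),
        η I (fun r => I (σ r)) * ω (fun r => I (σ r)) = η I I * ω I := fun σ => by
      rw [hη.alternating_right I σ I, hω σ I, mul_mul_mul_comm, sign_mul_sign_self, one_mul]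
    rw [sum_eq_sum_perm_of_injective hI _ hoff]
    simp only [horbit, Finset.sum_const, Finset.card_univ, Fintype.card_perm,
      Fintype.card_fin, nsmul_eq_mul]
  · have hzero : ∀ J, η I J = 0 := fun J =>
      IsAlternating.apply_eq_zero_of_not_injective (f := (η · J))
        (fun σ I => hη.alternating_left σ I J) hI
    simp [hzero]

lemma apply_comp_perm_self (hη : IsLorentzInvariantAltForm η) (σ : Perm (Fin k))
    (I : Fin k → Fin n) : η (fun r => I (σ r)) (fun r => I (σ r)) = η I I := by
  rw [hη.alternating_left, hη.alternating_right, ← mul_assoc, sign_mul_sign_self, one_mul]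

lemma apply_perm_self (hη : IsLorentzInvariantAltForm η) {π : Perm (Fin n)}
    (hπ : ∀ i, eps n (π i) = eps n i) (I : Fin k → Fin n) :
    η (fun r => π (I r)) (fun r => π (I r)) = η I I := by
  have hA : IsLorentz n ((π⁻¹).permMatrix ℝ) :=
    isLorentz_permMatrix fun i => by simpa using (hπ (π⁻¹ i)).symm
  have hrows : ∀ r j, j ≠ I r → (π⁻¹).permMatrix ℝ (π (I r)) j = 0 := fun r j hj => by
    simp [PEquiv.toMatrix_apply, Ne.symm hj]
  rw [hη.apply_eq_of_rows_single hA hrows hrows]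
  simp [PEquiv.toMatrix_apply]

lemma apply_self_eq_of_mem_range_iff (hη : IsLorentzInvariantAltForm η) {t : Fin n}
    (ht : (t : ℕ) = 0) {I J : Fin k → Fin n} (hI : Injective I) (hJ : Injective J)
    (h : t ∈ Set.range I ↔ t ∈ Set.range J) : η I I = η J J := by
  by_cases htI : t ∈ Set.range I
  · obtain ⟨a, ha⟩ := htI
    obtain ⟨b, hb⟩ := h.mp ⟨a, ha⟩
    -- move `t` to the slot it occupies in `J`, then map one tuple onto the other
    rw [← hη.apply_comp_perm_self (swap a b) I]
    obtain ⟨π, hπ⟩ := Perm.exists_extending_pair (fun r => I (swap a b r)) J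
      (hI.comp (swap a b).injective) hJ
    have hπt : π t = t := by simpa [ha, hb] using hπ b
    rw [← hη.apply_perm_self (eps_apply_perm ht hπt), funext hπ]
  · have htJ : t ∉ Set.range J := mt h.mpr htI
    obtain ⟨π, hπ⟩ := Perm.exists_extending_pair (Fin.cons t I : Fin (k + 1) → Fin n)
      (Fin.cons t J) (Fin.cons_injective_iff.mpr ⟨htI, hI⟩)
      (Fin.cons_injective_iff.mpr ⟨htJ, hJ⟩)
    have hπt : π t = t := by simpa using hπ 0
    have hπI : (fun r => π (I r)) = J := funext fun r => by simpa using hπ r.succ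
    rw [← hη.apply_perm_self (eps_apply_perm ht hπt), hπI]

lemma apply_cons_self_eq_neg {η : (Fin (k + 1) → Fin n) → (Fin (k + 1) → Fin n) → ℝ}
    (hη : IsLorentzInvariantAltForm η) {t x : Fin n} (ht : (t : ℕ) = 0) {K : Fin k → Fin n}
    (hK : Injective (Fin.cons x K : Fin (k + 1) → Fin n)) (hxt : x ≠ t)
    (htK : t ∉ Set.range K) :
    η (Fin.cons x K) (Fin.cons x K) = -η (Fin.cons t K) (Fin.cons t K) := by
  obtain ⟨hxK, hKinj⟩ := Fin.cons_injective_iff.mp hK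
  -- any nonzero rapidity works; here `cosh θ = 5/4`, `sinh θ = 3/4`
  have hB : IsLorentz n (boost t x (5 / 4) (3 / 4)) := isLorentz_boost (Ne.symm hxt)
    (by simp [eps_eq_ite ht]) (by simp [eps_eq_ite ht, hxt]) (by norm_num)
  have hrow : ∀ r j, boost t x (5 / 4) (3 / 4) (K r) j = if K r = j then 1 else 0 :=
    fun r => boost_apply_of_ne (fun h => htK ⟨r, h⟩) (fun h => hxK ⟨r, h⟩) _ _
  have hcollapse : ∀ f : (Fin (k + 1) → Fin n) → ℝ,
      ∑ y, (∏ r, boost t x (5 / 4) (3 / 4) ((Fin.cons x K : Fin (k + 1) → Fin n) r) (y r)) *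
          f y = 5 / 4 * f (Fin.cons x K) + 3 / 4 * f (Fin.cons t K) := fun f => by
    rw [sum_prod_mul_eq_sum_cons _ K fun r j hj => by simp [hrow, Ne.symm hj]]
    simp only [Fin.cons_succ, Fin.cons_zero, hrow, if_pos, Finset.prod_const_one, one_mul]
    exact sum_boost_mul (Ne.symm hxt) _ _ _
  have h := hη.eq_sum_mul_sum hB (Fin.cons x K) (Fin.cons x K)
  simp only [hcollapse] at h
  have hcross : η (Fin.cons t K) (Fin.cons x K) = 0 :=
    hη.apply_eq_zero_of_mem_range (Fin.cons_injective_iff.mpr ⟨htK, hKinj⟩) ⟨0, rfl⟩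
      (by simpa [Fin.range_cons, Ne.symm hxt] using htK)
  rw [hcross, hη.symm (Fin.cons x K) (Fin.cons t K), hcross] at h
  linarith

lemma apply_self_mul_prod_eps_eq
    {η : (Fin (k + 1) → Fin n) → (Fin (k + 1) → Fin n) → ℝ}
    (hη : IsLorentzInvariantAltForm η) {I J : Fin (k + 1) → Fin n} (hI : Injective I)
    (hJ : Injective J) : η I I * ∏ r, eps n (I r) = η J J * ∏ r, eps n (J r) := by
  set t : Fin n := ⟨0, (I 0).pos⟩
  have ht : (t : ℕ) = 0 := rfl
  have hprod : ∀ I : Fin (k + 1) → Fin n, Injective I →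
      ∏ r, eps n (I r) = if t ∈ Set.range I then -1 else 1 := fun I hI => by
    simp only [eps_eq_ite ht]
    exact prod_ite_eq_neg_one_of_injective hI t
  have hflip : ∀ I J : Fin (k + 1) → Fin n, Injective I → Injective J →
      t ∈ Set.range I → t ∉ Set.range J → η J J = -η I I := by
    intro I J hI hJ htI htJ
    obtain ⟨x, K, rfl⟩ : ∃ x K, J = Fin.cons x K :=
      ⟨J 0, Fin.tail J, (Fin.cons_self_tail J).symm⟩
    simp only [Fin.range_cons, Set.mem_insert_iff, not_or] at htJ
    have hK : Injective (Fin.cons t K : Fin (k + 1) → Fin n) :=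
      Fin.cons_injective_iff.mpr ⟨htJ.2, (Fin.cons_injective_iff.mp hJ).2⟩
    rw [hη.apply_cons_self_eq_neg ht hJ (Ne.symm htJ.1) htJ.2,
      hη.apply_self_eq_of_mem_range_iff ht hK hI (iff_of_true ⟨0, rfl⟩ htI)]
  rw [hprod I hI, hprod J hJ]
  by_cases htI : t ∈ Set.range I <;> by_cases htJ : t ∈ Set.range J
  · rw [hη.apply_self_eq_of_mem_range_iff ht hI hJ (iff_of_true htI htJ), if_pos htI,
      if_pos htJ]
  · rw [hflip I J hI hJ htI htJ, if_pos htI, if_neg htJ]; ring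
  · rw [hflip J I hJ hI htJ htI, if_neg htI, if_pos htJ]; ring
  · rw [hη.apply_self_eq_of_mem_range_iff ht hI hJ (iff_of_false htI htJ), if_neg htI,
      if_neg htJ]

lemma exists_apply_self_eq_mul_prod_eps
    {η : (Fin (k + 1) → Fin n) → (Fin (k + 1) → Fin n) → ℝ}
    (hη : IsLorentzInvariantAltForm η) :
    ∃ c : ℝ, ∀ I, Injective I → η I I = c * ∏ r, eps n (I r) := by
  by_cases hex : ∃ I₀ : Fin (k + 1) → Fin n, Injective I₀
  · obtain ⟨I₀, hI₀⟩ := hex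
    refine ⟨η I₀ I₀ * ∏ r, eps n (I₀ r), fun I hI => ?_⟩
    have hsq : (∏ r, eps n (I r)) * ∏ r, eps n (I r) = 1 := by
      rw [← Finset.prod_mul_distrib]
      exact Finset.prod_eq_one fun r _ => eps_mul_self (I r)
    rw [hη.apply_self_mul_prod_eps_eq hI₀ hI]
    linear_combination -η I I * hsq
  · exact ⟨0, fun I hI => absurd ⟨I, hI⟩ hex⟩

end IsLorentzInvariantAltForm

theorem statement19_general (n m : ℕ)
    (η : (Fin (m + 1) → Fin n) → (Fin (m + 1) → Fin n) → ℝ)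
    (hanti1 : ∀ (σ : Equiv.Perm (Fin (m + 1))) (I J : Fin (m + 1) → Fin n),
      η (fun r => I (σ r)) J = ((Equiv.Perm.sign σ : ℤ) : ℝ) * η I J)
    (hswap : ∀ I J : Fin (m + 1) → Fin n, η I J = η J I)
    (hlor : ∀ A : Matrix (Fin n) (Fin n) ℝ, IsLorentz n A →
      ∀ I J : Fin (m + 1) → Fin n,
        η I J = ∑ I' : Fin (m + 1) → Fin n, ∑ J' : Fin (m + 1) → Fin n,
          (∏ r, A (I r) (I' r)) * (∏ s, A (J s) (J' s)) * η I' J') :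
    ∃ c : ℝ, ∀ ω : (Fin (m + 1) → Fin n) → ℝ,
      (∀ (σ : Equiv.Perm (Fin (m + 1))) (I : Fin (m + 1) → Fin n),
        ω (fun r => I (σ r)) = ((Equiv.Perm.sign σ : ℤ) : ℝ) * ω I) →
      (∑ I : Fin (m + 1) → Fin n, ∑ J : Fin (m + 1) → Fin n, η I J * ω I * ω J) =
        c * ∑ I : Fin (m + 1) → Fin n, (∏ r, eps n (I r)) * ω I ^ 2 := by
  have hη : IsLorentzInvariantAltForm η := ⟨hanti1, hswap, hlor⟩
  obtain ⟨c, hc⟩ := hη.exists_apply_self_eq_mul_prod_eps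
  refine ⟨(m + 1).factorial * c, fun ω hω => ?_⟩
  calc ∑ I, ∑ J, η I J * ω I * ω J = ∑ I, ω I * ∑ J, η I J * ω J := by
        simp only [Finset.mul_sum, mul_comm, mul_left_comm]
    _ = ∑ I, ω I * ((m + 1).factorial * (η I I * ω I)) := by
        simp only [hη.sum_apply_mul hω]
    _ = ∑ I, (m + 1).factorial * c * ((∏ r, eps n (I r)) * ω I ^ 2) := by
        refine Finset.sum_congr rfl fun I _ => ?_
        by_cases hI : Injective I
        · rw [hc I hI]; ring
        · rw [IsAlternating.apply_eq_zero_of_not_injective hω hI]; ring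
    _ = _ := by rw [Finset.mul_sum]

theorem statement19 (n m : ℕ) (hn : 2 ≤ n) (hm : 1 ≤ m) (hmn : m + 1 ≤ n)
    (η : (Fin (m + 1) → Fin n) → (Fin (m + 1) → Fin n) → ℝ)
    (hanti1 : ∀ (σ : Equiv.Perm (Fin (m + 1))) (I J : Fin (m + 1) → Fin n),
      η (fun r => I (σ r)) J = ((Equiv.Perm.sign σ : ℤ) : ℝ) * η I J)
    (hanti2 : ∀ (σ : Equiv.Perm (Fin (m + 1))) (I J : Fin (m + 1) → Fin n),
      η I (fun s => J (σ s)) = ((Equiv.Perm.sign σ : ℤ) : ℝ) * η I J)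
    (hswap : ∀ I J : Fin (m + 1) → Fin n, η I J = η J I)
    (hlor : ∀ A : Matrix (Fin n) (Fin n) ℝ, IsLorentz n A →
      ∀ I J : Fin (m + 1) → Fin n,
        η I J = ∑ I' : Fin (m + 1) → Fin n, ∑ J' : Fin (m + 1) → Fin n,
          (∏ r, A (I r) (I' r)) * (∏ s, A (J s) (J' s)) * η I' J') :
    ∃ c : ℝ, ∀ ω : (Fin (m + 1) → Fin n) → ℝ,
      (∀ (σ : Equiv.Perm (Fin (m + 1))) (I : Fin (m + 1) → Fin n),
        ω (fun r => I (σ r)) = ((Equiv.Perm.sign σ : ℤ) : ℝ) * ω I) →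
      (∑ I : Fin (m + 1) → Fin n, ∑ J : Fin (m + 1) → Fin n, η I J * ω I * ω J) =
        c * ∑ I : Fin (m + 1) → Fin n, (∏ r, eps n (I r)) * ω I ^ 2 :=
  statement19_general n m η hanti1 hswap hlor

end GeomActions
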